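/- Let M be a 3-array of perfect matchings of a cubic graph G. Then the set of doubly and triply covered edges forms a perfect matching of the core of M; consequently, the number of uncovered edges equals the number of doubly covered edges plus twice the number of triply covered edges. -/

import Mathlib

open SimpleGraph

variable {V : Type} [Fintype V] [DecidableEq V]

/-- A cubic graph: every vertex has exactly three neighbours. -/
def IsCubic (G : SimpleGraph V) : Prop := ∀ v : V, (G.neighborSet v).ncard = 3

/-- A proper 3-edge-colouring: adjacent (distinct, vertex-sharing) edges get distinct colours. -/
def ProperEdgeColoring (G : SimpleGraph V) (c : Sym2 V → Fin 3) : Prop :=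
  ∀ e₁ ∈ G.edgeSet, ∀ e₂ ∈ G.edgeSet, e₁ ≠ e₂ → (∃ v : V, v ∈ e₁ ∧ v ∈ e₂) → c e₁ ≠ c e₂

def ThreeEdgeColorable (G : SimpleGraph V) : Prop :=
  ∃ c : Sym2 V → Fin 3, ProperEdgeColoring G c

/-- 2-connectedness: at least 3 vertices, connected, and deleting any vertex leaves it connected. -/
def TwoConnected (G : SimpleGraph V) : Prop :=
  3 ≤ Fintype.card V ∧ G.Connected ∧
    ∀ v : V, ((⊤ : G.Subgraph).deleteVerts {v}).coe.Connected

/-- A snark: a 2-connected cubic graph with no proper 3-edge-colouring. -/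
def IsSnark (G : SimpleGraph V) : Prop :=
  IsCubic G ∧ TwoConnected G ∧ ¬ ThreeEdgeColorable G

/-- The set of edges left uncovered by a 3-array of perfect matchings. -/
def uncovered (G : SimpleGraph V) (M : Fin 3 → G.Subgraph) : Set (Sym2 V) :=
  {e | e ∈ G.edgeSet ∧ ∀ i, e ∉ (M i).edgeSet}

/-- The colouring defect: minimum number of uncovered edges over all 3-arrays. -/
noncomputable def defect (G : SimpleGraph V) : ℕ :=
  sInf {n : ℕ | ∃ M : Fin 3 → G.Subgraph,
    (∀ i, (M i).IsPerfectMatching) ∧ n = (uncovered G M).ncard}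

/-- The number of matchings of the 3-array containing a given edge. -/
noncomputable def coverCount (G : SimpleGraph V) (M : Fin 3 → G.Subgraph)
    (e : Sym2 V) : ℕ :=
  {i : Fin 3 | e ∈ (M i).edgeSet}.ncard

/-- The edge set of the core: edges of `G` not simply covered. -/
def coreEdges (G : SimpleGraph V) (M : Fin 3 → G.Subgraph) : Set (Sym2 V) :=
  {e | e ∈ G.edgeSet ∧ coverCount G M e ≠ 1}

/-- The core of a 3-array, as a graph on `V`. -/
def coreGraph (G : SimpleGraph V) (M : Fin 3 → G.Subgraph) : SimpleGraph V where
  Adj u w := G.Adj u w ∧ coverCount G M s(u, w) ≠ 1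
  symm := by
    constructor
    intro u w h
    refine ⟨h.1.symm, ?_⟩
    rw [Sym2.eq_swap]
    exact h.2
  loopless := by
    constructor
    intro v h
    exact G.ne_of_adj h.1 rfl

/-!
Each of the three perfect matchings uses exactly one of the three edges at a vertex `v`, so the
cover counts of the edges at `v` sum to 3: the multiset of counts is `{1,1,1}`, `{0,1,2}` or
`{0,0,3}`. Hence a vertex of the core meets exactly one edge covered at least twice, and at every
vertex the number of uncovered edges equals the number of doubly covered edges plus twice the number
of triply covered ones. Summing this local identity over all vertices counts every edge twice.
-/

open Finset

section Profile

variable {α : Type*} {s : Finset α} {c : α → ℕ}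

lemma card_filter_eq_zero_eq (hc : ∀ w ∈ s, c w ≤ 3) (hsum : ∑ w ∈ s, c w = #s) :
    #{w ∈ s | c w = 0} = #{w ∈ s | c w = 2} + 2 * #{w ∈ s | c w = 3} := by
  have hmaps : ∀ w ∈ s, c w ∈ range 4 := fun w hw => mem_range.2 (Nat.lt_succ_of_le (hc w hw))
  have hcard := card_eq_sum_card_fiberwise hmaps
  have hweight := sum_fiberwise_of_maps_to hmaps c
  have hfiber : ∀ k, ∑ w ∈ s with c w = k, c w = #{w ∈ s | c w = k} * k := fun k => by
    rw [sum_congr rfl fun w hw => (mem_filter.1 hw).2, sum_const, smul_eq_mul]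
  simp only [sum_range_succ, sum_range_zero, hfiber] at hcard hweight
  omega

lemma card_filter_two_le_eq_one (hsum : ∑ w ∈ s, c w = #s) (hs : #s ≤ 3)
    (hne : ∃ w ∈ s, c w ≠ 1) : #{w ∈ s | 2 ≤ c w} = 1 := by
  have hle : #{w ∈ s | 2 ≤ c w} ≤ 1 := card_le_one.2 fun a ha b hb => by
    by_contra hab
    rw [mem_filter] at ha hb
    have := add_le_sum (fun w _ => Nat.zero_le (c w)) ha.1 hb.1 hab
    omega
  have hpos : 0 < #{w ∈ s | 2 ≤ c w} := by
    by_contra! hzero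
    have hlt : ∑ w ∈ s, c w < ∑ _w ∈ s, 1 := by
      simp only [nonpos_iff_eq_zero, card_eq_zero, filter_eq_empty_iff, not_le] at hzero
      obtain ⟨w, hw, hw1⟩ := hne
      exact sum_lt_sum (fun w hw => by have := hzero hw; omega) ⟨w, hw, by have := hzero hw; omega⟩
    rw [sum_const, smul_eq_mul, mul_one] at hlt
    omega
  omega

end Profile

section CoverCount

variable {V : Type} {G : SimpleGraph V} {M : Fin 3 → G.Subgraph}

lemma coverCount_eq_zero_of_not_adj {v w : V} (h : ¬ G.Adj v w) :
    coverCount G M s(v, w) = 0 := by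
  rw [coverCount, Set.ncard_eq_zero, Set.eq_empty_iff_forall_notMem]
  exact fun i hi => h ((M i).adj_sub hi)

lemma coverCount_le_three (e : Sym2 V) : coverCount G M e ≤ 3 :=
  (Set.ncard_le_card _).trans_eq (by simp)

lemma sum_coverCount_eq_three [Fintype V] (hM : ∀ i, (M i).IsPerfectMatching) (v : V) :
    ∑ w, coverCount G M s(v, w) = 3 := by
  classical
  have hpartner : ∀ i, #{w | (M i).Adj v w} = 1 := fun i => by
    obtain ⟨w, hw, huniq⟩ := (M i).isPerfectMatching_iff.1 (hM i) v
    rw [card_eq_one]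
    exact ⟨w, by ext u; simpa using ⟨huniq u, fun h => h ▸ hw⟩⟩
  calc ∑ w, coverCount G M s(v, w) = ∑ w, #{i | (M i).Adj v w} := by
        refine sum_congr rfl fun w _ => ?_
        rw [coverCount, ← Set.ncard_coe_finset]
        simp
    _ = ∑ i : Fin 3, #{w | (M i).Adj v w} := by
        simp only [card_filter]
        exact sum_comm
    _ = 3 := by simp [hpartner]

lemma sum_neighborFinset_coverCount_eq_three [Fintype V] [DecidableRel G.Adj]
    (hM : ∀ i, (M i).IsPerfectMatching) (v : V) :
    ∑ w ∈ G.neighborFinset v, coverCount G M s(v, w) = 3 := by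
  rw [← sum_coverCount_eq_three hM v]
  exact sum_subset (subset_univ _) fun w _ hw =>
    coverCount_eq_zero_of_not_adj (by simpa using hw)

end CoverCount

section Incidence

variable {V : Type} [Fintype V] {G : SimpleGraph V} [DecidableRel G.Adj]
  (P : Sym2 V → Prop) [DecidablePred P]

lemma ncard_incidence_filter (v : V) :
    {e ∈ G.edgeSet | v ∈ e ∧ P e}.ncard = #{w ∈ G.neighborFinset v | P s(v, w)} := by
  have himage : {e ∈ G.edgeSet | v ∈ e ∧ P e}
      = (fun w => s(v, w)) '' ↑{w ∈ G.neighborFinset v | P s(v, w)} := by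
    ext e
    constructor
    · rintro ⟨he, hve, hP⟩
      obtain ⟨w, rfl⟩ := Sym2.mem_iff_exists.1 hve
      exact ⟨w, by simpa using ⟨he, hP⟩, rfl⟩
    · rintro ⟨w, hw, rfl⟩
      simp only [coe_filter, mem_neighborFinset, Set.mem_ofPred_eq] at hw
      exact ⟨hw.1, Sym2.mem_mk_left v w, hw.2⟩
  rw [himage, Set.ncard_image_of_injective _ fun _ _ => Sym2.congr_right.1, Set.ncard_coe_finset]

lemma two_mul_ncard_edgeSet_filter :
    2 * {e ∈ G.edgeSet | P e}.ncard = ∑ v, #{w ∈ G.neighborFinset v | P s(v, w)} := by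
  classical
  set H := G.deleteEdges {e | ¬ P e}
  have hedges : {e ∈ G.edgeSet | P e} = H.edgeSet := by
    ext e; simp [H]
  rw [hedges, ← coe_edgeFinset, Set.ncard_coe_finset, ← sum_degrees_eq_twice_card_edges]
  refine sum_congr rfl fun v _ => ?_
  rw [← card_neighborFinset_eq_degree]
  congr 1
  ext w; simp [H]

end Incidence

lemma IsCubic.card_neighborFinset {V : Type} [Fintype V] {G : SimpleGraph V} [DecidableRel G.Adj]
    (hG : IsCubic G) (v : V) : #(G.neighborFinset v) = 3 := by
  rw [neighborFinset, ← Set.ncard_eq_toFinset_card']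
  exact hG v

theorem stmt_6 (G : SimpleGraph V) (hG : IsCubic G)
    (M : Fin 3 → G.Subgraph) (hM : ∀ i, (M i).IsPerfectMatching) :
    (∀ v : V, (∃ e ∈ coreEdges G M, v ∈ e) →
      {e ∈ coreEdges G M | v ∈ e ∧ 2 ≤ coverCount G M e}.ncard = 1) ∧
    {e ∈ G.edgeSet | coverCount G M e = 0}.ncard =
      {e ∈ G.edgeSet | coverCount G M e = 2}.ncard +
        2 * {e ∈ G.edgeSet | coverCount G M e = 3}.ncard := by
  classical
  have hsum (v : V) : ∑ w ∈ G.neighborFinset v, coverCount G M s(v, w) = #(G.neighborFinset v) :=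
    (sum_neighborFinset_coverCount_eq_three hM v).trans (hG.card_neighborFinset v).symm
  constructor
  · rintro v ⟨e, ⟨he, hcore⟩, hve⟩
    obtain ⟨w, rfl⟩ := Sym2.mem_iff_exists.1 hve
    have hcore_filter : {e ∈ coreEdges G M | v ∈ e ∧ 2 ≤ coverCount G M e}
        = {e ∈ G.edgeSet | v ∈ e ∧ 2 ≤ coverCount G M e} := by
      ext e
      simp only [coreEdges, Set.mem_ofPred_eq]
      exact ⟨fun h => ⟨h.1.1, h.2⟩, fun h => ⟨⟨h.1, by have := h.2.2; omega⟩, h.2⟩⟩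
    rw [hcore_filter, ncard_incidence_filter]
    exact card_filter_two_le_eq_one (hsum v) (hG.card_neighborFinset v).le
      ⟨w, (mem_neighborFinset _ _ _).2 he, hcore⟩
  · have hlocal v := card_filter_eq_zero_eq (fun w _ => coverCount_le_three (M := M) s(v, w)) (hsum v)
    have hdouble k := two_mul_ncard_edgeSet_filter (G := G) (coverCount G M · = k)
    rw [← Nat.mul_left_cancel_iff two_pos, hdouble, mul_add, mul_left_comm, hdouble, hdouble,
      mul_sum, ← sum_add_distrib]
    exact sum_congr rfl fun v _ => hlocal v
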